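/- Let A ∈ 𝒮ⁿ[k] be a Robinson matrix and let d ∈ 𝔻ᵏ satisfy the path condition for A. Then the map Π : [n] → ℝ defined recursively by Π(1) = 0 and Π(v) = (ub_v + lb_v)/2 for 2 ≤ v ≤ n satisfies the strict inequality system: for all u < v in [n] and all t ∈ {0,…,k}, a_{u,v} = t if and only if d_{t+1} < Π(v) − Π(u) < d_t, where by convention d_0 = +∞ and d_{k+1} = 0. In particular Π is a uniform embedding of A with respect to d. -/

import Mathlib

/-- The standard unit vector `χ_t ∈ ℤᵏ` (as a function `ℕ → ℤ`, supported on index `t`). -/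
def chi (t : ℕ) : ℕ → ℤ := fun i => if i = t then 1 else 0

/-- The dot product `bᵀ d = Σ_{i=1}^k b_i d_i`. -/
def dotProd (k : ℕ) (b : ℕ → ℤ) (d : ℕ → ℝ) : ℝ :=
  ∑ i ∈ Finset.Icc 1 k, (b i : ℝ) * d i

/-- `A ∈ 𝒮ⁿ[k]`: a symmetric matrix with entries in `{0,…,k}`, diagonal `k`,
entries increasing towards the diagonal. -/
def IsRobinson (n k : ℕ) (a : Fin n → Fin n → ℕ) : Prop :=
  (∀ u v, a u v = a v u) ∧ (∀ u, a u u = k) ∧ (∀ u v, a u v ≤ k) ∧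
    ∀ u v w : Fin n, u < v → v < w → a u w ≤ a u v ∧ a u w ≤ a v w

/-- `d ∈ 𝔻ᵏ`: threshold vectors with `d 1 > d 2 > ⋯ > d k > 0`
(values outside `{1,…,k}` are irrelevant). -/
def IsThreshold (k : ℕ) (d : ℕ → ℝ) : Prop :=
  (∀ i, 1 ≤ i → i < k → d (i + 1) < d i) ∧ 0 < d k

/-- Uniform embedding: for all pairs `u,v` and all `t ≤ k`,
`a u v = t ↔ d_{t+1} < |f v − f u| ≤ d_t`, with conventions `d_0 = +∞`, `d_{k+1} = −∞`. -/
def IsUnifEmb (n k : ℕ) (a : Fin n → Fin n → ℕ) (d : ℕ → ℝ)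
    (f : Fin n → ℝ) : Prop :=
  ∀ u v : Fin n, ∀ t : ℕ, t ≤ k →
    (a u v = t ↔ (t = k ∨ d (t + 1) < |f v - f u|) ∧ (t = 0 ∨ |f v - f u| ≤ d t))

/-- The strict inequality system: for all `u < v` and all `t ≤ k`,
`a u v = t ↔ d_{t+1} < f v − f u < d_t`, with conventions `d_0 = +∞`, `d_{k+1} = 0`. -/
def SatisfiesStrict (n k : ℕ) (a : Fin n → Fin n → ℕ) (d : ℕ → ℝ)
    (f : Fin n → ℝ) : Prop :=
  ∀ u v : Fin n, u < v → ∀ t : ℕ, t ≤ k →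
    (a u v = t ↔ ((if t = k then (0 : ℝ) else d (t + 1)) < f v - f u) ∧
      (t = 0 ∨ f v - f u < d t))

/-- `β⁺(x,y)`: for `x < y`, `β⁺(x,y) = χ_{a x y}` (junk value `χ_0` when `a x y = 0`,
where it is undefined); for `x > y`, `β⁺(x,y) = −β⁻(y,x)`. -/
def betaP {n : ℕ} (k : ℕ) (a : Fin n → Fin n → ℕ) (x y : Fin n) : ℕ → ℤ :=
  if x < y then chi (a x y)
  else if y < x then (if a x y = k then 0 else -chi (a x y + 1))
  else 0

/-- `β⁻(x,y)`: for `x < y`, `β⁻(x,y) = χ_{a x y + 1}` if `a x y < k` and `0` if `a x y = k`;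
for `x > y`, `β⁻(x,y) = −β⁺(y,x)`. -/
def betaM {n : ℕ} (k : ℕ) (a : Fin n → Fin n → ℕ) (x y : Fin n) : ℕ → ℤ :=
  if x < y then (if a x y = k then 0 else chi (a x y + 1))
  else if y < x then -chi (a x y)
  else 0

/-- `β⁺(W) = Σ_i β⁺(w_{i−1}, w_i)` over the steps of the walk `W`. -/
def betaPWalk {n : ℕ} (k : ℕ) (a : Fin n → Fin n → ℕ) (w : List (Fin n)) : ℕ → ℤ :=
  ((w.zip w.tail).map fun p => betaP k a p.1 p.2).sum

/-- `β⁻(W) = Σ_i β⁻(w_{i−1}, w_i)` over the steps of the walk `W`. -/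
def betaMWalk {n : ℕ} (k : ℕ) (a : Fin n → Fin n → ℕ) (w : List (Fin n)) : ℕ → ℤ :=
  ((w.zip w.tail).map fun p => betaM k a p.1 p.2).sum

/-- A `(u,v)`-upper-bound-walk: a walk from `u` to `v` with consecutive entries distinct,
in which every increasing step is an edge (`a x y ≥ 1`). -/
def IsUBWalk {n : ℕ} (a : Fin n → Fin n → ℕ) (u v : Fin n) (w : List (Fin n)) : Prop :=
  w.head? = some u ∧ w.getLast? = some v ∧
    List.Chain' (fun x y => x ≠ y ∧ (x < y → 1 ≤ a x y)) w

/-- A `(u,v)`-lower-bound-walk: a walk from `u` to `v` with consecutive entries distinct,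
in which every decreasing step is an edge (`a x y ≥ 1`). -/
def IsLBWalk {n : ℕ} (a : Fin n → Fin n → ℕ) (u v : Fin n) (w : List (Fin n)) : Prop :=
  w.head? = some u ∧ w.getLast? = some v ∧
    List.Chain' (fun x y => x ≠ y ∧ (y < x → 1 ≤ a x y)) w

/-- An upper-bound-cycle: a `(u,u)`-upper-bound-walk of length `p ≥ 2` in which
`u = w_0 = w_p` is the only repeated vertex. -/
def IsUBCycle {n : ℕ} (a : Fin n → Fin n → ℕ) (w : List (Fin n)) : Prop :=
  ∃ u : Fin n, IsUBWalk a u u w ∧ 3 ≤ w.length ∧ w.dropLast.Nodup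

/-- The path condition for `A` and `d`: for all `u < v`, every `(u,v)`-upper-bound-path `W₁`
and every `(u,v)`-lower-bound-path `W₂` satisfy `β⁻(W₂)ᵀ d < β⁺(W₁)ᵀ d`. -/
def PathCondition (n k : ℕ) (a : Fin n → Fin n → ℕ) (d : ℕ → ℝ) : Prop :=
  ∀ u v : Fin n, u < v → ∀ w₁ w₂ : List (Fin n),
    IsUBWalk a u v w₁ → w₁.Nodup → IsLBWalk a u v w₂ → w₂.Nodup →
      dotProd k (betaMWalk k a w₂) d < dotProd k (betaPWalk k a w₁) d

/-- The prefix-sum partial order `⪯` on `ℤᵏ`. -/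
def Preceq (k : ℕ) (x y : ℕ → ℤ) : Prop :=
  ∀ t, 1 ≤ t → t ≤ k → ∑ i ∈ Finset.Icc 1 t, x i ≤ ∑ i ∈ Finset.Icc 1 t, y i

/-!
Call `f` walk-bounded from `x` to `y` if `f y - f x < β⁺(W)ᵀ d` for every upper-bound-walk
`W` from `x` to `y`. Reversing a lower-bound-walk turns `β⁻` into `-β⁺`, so walk-boundedness
in both directions between `u < v`, applied to the one-step walks `⟨u, v⟩` and `⟨v, u⟩`,
puts `Π(v) - Π(u)` strictly inside the `a_{u,v}`-th threshold band.

Walk-boundedness is proved by strong induction on `v`. The path condition says that a closed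
upper-bound-walk made of two paths `x → y → x` has positive weight; hence cutting a simple
cycle out of a walk never increases its weight, and the minimum defining `ub_v` (maximum
defining `lb_v`) is also a bound over walks rather than paths. It remains to see
`lb_v < ub_v`, which puts `Π(v)` strictly between them. If the extrema are attained from
`i₁` and `i₂`, the `ub`-path into `v` followed by the reversed `lb`-path is an
upper-bound-walk `i₁ → v → i₂` of weight `ub_v - lb_v + Π(i₂) - Π(i₁)`: for `i₁ ≠ i₂` the
induction hypothesis (both ends lie below `v`) makes this exceed `Π(i₂) - Π(i₁)`, and for
`i₁ = i₂` it is a closed walk, of positive weight.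
-/

namespace List

section StepSum

variable {α M : Type*}

def stepSum [AddCommMonoid M] (g : α → α → M) (l : List α) : M :=
  ((l.zip l.tail).map fun p => g p.1 p.2).sum

section AddCommMonoid

variable [AddCommMonoid M] (g : α → α → M)

@[simp] theorem stepSum_nil : stepSum g [] = 0 := rfl

@[simp] theorem stepSum_singleton (x : α) : stepSum g [x] = 0 := rfl

@[simp] theorem stepSum_cons_cons (x y : α) (l : List α) :
    stepSum g (x :: y :: l) = g x y + stepSum g (y :: l) := by
  simp [stepSum]

theorem stepSum_append_cons (l₁ : List α) (x : α) (l₂ : List α) :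
    stepSum g (l₁ ++ x :: l₂) = stepSum g (l₁ ++ [x]) + stepSum g (x :: l₂) := by
  induction l₁ with
  | nil => simp
  | cons b l₁ ih =>
    cases l₁ with
    | nil => simp
    | cons c l₁ => simp only [cons_append, stepSum_cons_cons] at ih ⊢; rw [ih, add_assoc]

theorem stepSum_append {l₁ l₂ : List α} {m : α} (h₁ : l₁.getLast? = some m)
    (h₂ : l₂.head? = some m) : stepSum g (l₁ ++ l₂.tail) = stepSum g l₁ + stepSum g l₂ := by
  obtain ⟨l₁, rfl⟩ := getLast?_eq_some_iff.1 h₁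
  obtain ⟨l₂, rfl⟩ := head?_eq_some_iff.1 h₂
  simpa using stepSum_append_cons g l₁ m l₂

end AddCommMonoid

theorem stepSum_reverse [AddCommGroup M] {g g' : α → α → M} (h : ∀ x y, g' y x = -g x y)
    (l : List α) : stepSum g' l.reverse = -stepSum g l := by
  induction l with
  | nil => simp
  | cons x l ih =>
    cases l with
    | nil => simp
    | cons y l =>
      rw [reverse_cons, reverse_cons, append_assoc, singleton_append, stepSum_append_cons,
        ← reverse_cons, ih]
      simp [h, add_comm]

end StepSum

theorem exists_eq_append_cons_append_cons_of_not_nodup {α : Type*} {l : List α}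
    (h : ¬l.Nodup) :
    ∃ l₁ x l₂ l₃, l = l₁ ++ x :: l₂ ++ x :: l₃ ∧ (x :: l₂).Nodup := by
  induction l with
  | nil => simp at h
  | cons b l ih =>
    by_cases hl : l.Nodup
    · obtain ⟨l₂, l₃, rfl⟩ := append_of_mem (by simpa [nodup_cons, hl] using h)
      refine ⟨[], b, l₂, l₃, rfl, ?_⟩
      exact (nodup_middle.1 hl).sublist ((sublist_append_left l₂ l₃).cons_cons b)
    · obtain ⟨l₁, x, l₂, l₃, rfl, hx⟩ := ih hl
      exact ⟨b :: l₁, x, l₂, l₃, rfl, hx⟩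

end List

theorem dotProd_add (k : ℕ) (x y : ℕ → ℤ) (d : ℕ → ℝ) :
    dotProd k (x + y) d = dotProd k x d + dotProd k y d := by
  simp [dotProd, add_mul, Finset.sum_add_distrib]

theorem dotProd_neg (k : ℕ) (x : ℕ → ℤ) (d : ℕ → ℝ) : dotProd k (-x) d = -dotProd k x d := by
  simp [dotProd]

theorem dotProd_zero (k : ℕ) (d : ℕ → ℝ) : dotProd k 0 d = 0 := by
  simp [dotProd]

theorem dotProd_chi {k t : ℕ} (ht₁ : 1 ≤ t) (ht₂ : t ≤ k) (d : ℕ → ℝ) :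
    dotProd k (chi t) d = d t := by
  simp [dotProd, chi, ht₁, ht₂]

section Walks

variable {n k : ℕ} {a : Fin n → Fin n → ℕ} {d : ℕ → ℝ} {u v : Fin n} {w : List (Fin n)}

theorem betaP_swap (hs : ∀ x y, a x y = a y x) (x y : Fin n) :
    betaP k a y x = -betaM k a x y := by
  rcases lt_trichotomy x y with h | rfl | h
  · rw [betaP, if_neg (asymm h), if_pos h, betaM, if_pos h, hs y x]
    split <;> simp
  · simp [betaP, betaM]
  · rw [betaP, if_pos h, betaM, if_neg (asymm h), if_pos h, hs y x]
    simp

def ubWeight (k : ℕ) (a : Fin n → Fin n → ℕ) (d : ℕ → ℝ) (w : List (Fin n)) : ℝ :=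
  dotProd k (betaPWalk k a w) d

def lbWeight (k : ℕ) (a : Fin n → Fin n → ℕ) (d : ℕ → ℝ) (w : List (Fin n)) : ℝ :=
  dotProd k (betaMWalk k a w) d

theorem ubWeight_append_cons (l₁ : List (Fin n)) (x : Fin n) (l₂ : List (Fin n)) :
    ubWeight k a d (l₁ ++ x :: l₂) = ubWeight k a d (l₁ ++ [x]) + ubWeight k a d (x :: l₂) := by
  rw [ubWeight, betaPWalk, ← List.stepSum, List.stepSum_append_cons, dotProd_add]; rfl

theorem ubWeight_append {w₁ w₂ : List (Fin n)} {m : Fin n} (h₁ : w₁.getLast? = some m)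
    (h₂ : w₂.head? = some m) :
    ubWeight k a d (w₁ ++ w₂.tail) = ubWeight k a d w₁ + ubWeight k a d w₂ := by
  rw [ubWeight, betaPWalk, ← List.stepSum, List.stepSum_append _ h₁ h₂, dotProd_add]; rfl

theorem lbWeight_reverse (hs : ∀ x y, a x y = a y x) (w : List (Fin n)) :
    lbWeight k a d w.reverse = -ubWeight k a d w := by
  rw [lbWeight, betaMWalk, ← List.stepSum,
    List.stepSum_reverse (g := betaP k a) (fun x y => by rw [betaP_swap hs, neg_neg]),
    dotProd_neg]; rfl

theorem ubWeight_reverse (hs : ∀ x y, a x y = a y x) (w : List (Fin n)) :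
    ubWeight k a d w.reverse = -lbWeight k a d w := by
  rw [ubWeight, betaPWalk, ← List.stepSum, List.stepSum_reverse (betaP_swap hs), dotProd_neg]
  rfl

theorem ubWeight_pair (hle : ∀ u v, a u v ≤ k) (huv : u < v) (h : 1 ≤ a u v) :
    ubWeight k a d [u, v] = d (a u v) := by
  simp [ubWeight, betaPWalk, betaP, huv, dotProd_chi h (hle u v)]

theorem lbWeight_pair (hle : ∀ u v, a u v ≤ k) (huv : u < v) :
    lbWeight k a d [u, v] = if a u v = k then 0 else d (a u v + 1) := by
  have : a u v ≤ k := hle u v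
  split_ifs with h <;> simp [lbWeight, betaMWalk, betaM, huv, h, dotProd_zero]
  exact dotProd_chi (by omega) (by omega) d

theorem isUBWalk_pair (huv : u ≠ v) (h : u < v → 1 ≤ a u v) : IsUBWalk a u v [u, v] :=
  ⟨rfl, rfl, List.isChain_pair.2 ⟨huv, h⟩⟩

theorem IsUBWalk.append {m : Fin n} {w' : List (Fin n)} (h₁ : IsUBWalk a u m w)
    (h₂ : IsUBWalk a m v w') : IsUBWalk a u v (w ++ w'.tail) := by
  obtain ⟨hu, hm, hc⟩ := h₁
  obtain ⟨hm', hv, hc'⟩ := h₂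
  obtain ⟨w, rfl⟩ := List.getLast?_eq_some_iff.1 hm
  obtain ⟨w', rfl⟩ := List.head?_eq_some_iff.1 hm'
  refine ⟨by simpa [List.head?_append] using hu, by simpa using hv, ?_⟩
  have hc'' := hc.append_overlap hc' (List.cons_ne_nil m [])
  simp only [List.append_assoc, List.singleton_append, List.tail_cons] at hc'' ⊢
  exact hc''

theorem IsUBWalk.reverse (hs : ∀ x y, a x y = a y x) (h : IsUBWalk a u v w) :
    IsLBWalk a v u w.reverse := by
  obtain ⟨hu, hv, hc⟩ := h
  refine ⟨by rwa [List.head?_reverse], by rwa [List.getLast?_reverse], ?_⟩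
  exact List.isChain_reverse.2 <| hc.imp fun x y hxy =>
    ⟨hxy.1.symm, fun hlt => hs y x ▸ hxy.2 hlt⟩

theorem IsLBWalk.reverse (hs : ∀ x y, a x y = a y x) (h : IsLBWalk a u v w) :
    IsUBWalk a v u w.reverse := by
  obtain ⟨hu, hv, hc⟩ := h
  refine ⟨by rwa [List.head?_reverse], by rwa [List.getLast?_reverse], ?_⟩
  exact List.isChain_reverse.2 <| hc.imp fun x y hxy =>
    ⟨hxy.1.symm, fun hlt => hs y x ▸ hxy.2 hlt⟩

end Walks

section PathCondition

variable {n k : ℕ} {a : Fin n → Fin n → ℕ} {d : ℕ → ℝ} {u v : Fin n} {w : List (Fin n)}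

theorem PathCondition.ubWeight_add_pos (hs : ∀ x y, a x y = a y x)
    (hpc : PathCondition n k a d) {p q : List (Fin n)} (huv : u ≠ v)
    (hp : IsUBWalk a u v p) (hpn : p.Nodup) (hq : IsUBWalk a v u q) (hqn : q.Nodup) :
    0 < ubWeight k a d p + ubWeight k a d q := by
  wlog h : u < v generalizing u v p q
  · rw [add_comm]
    exact this huv.symm hq hqn hp hpn (huv.symm.lt_of_le (not_lt.1 h))
  have := hpc u v h p q.reverse hp hpn (hq.reverse hs) (List.nodup_reverse.2 hqn)
  rw [← lbWeight, lbWeight_reverse hs, ← ubWeight] at this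
  linarith

theorem IsUBWalk.exists_shorter (hs : ∀ x y, a x y = a y x) (hpc : PathCondition n k a d)
    (hw : IsUBWalk a u v w) (hnd : ¬w.Nodup) :
    ∃ w', IsUBWalk a u v w' ∧ w'.length < w.length ∧ ubWeight k a d w' ≤ ubWeight k a d w := by
  obtain ⟨l₁, x, l₂, l₃, rfl, hcyc⟩ := List.exists_eq_append_cons_append_cons_of_not_nodup hnd
  obtain ⟨hu, hv, hc⟩ := hw
  obtain _ | ⟨y, l₂⟩ := l₂
  · have : List.IsChain _ [x, x] := hc.infix ⟨l₁, l₃, by simp⟩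
    simp at this
  have hc₁ : List.IsChain _ (l₁ ++ [x]) := hc.infix ⟨[], y :: l₂ ++ x :: l₃, by simp⟩
  have hc₃ : List.IsChain _ (x :: l₃) := hc.infix ⟨l₁ ++ x :: y :: l₂, [], by simp⟩
  obtain ⟨hxy, hyx⟩ := List.isChain_cons_cons.1
    (hc.infix ⟨l₁, l₃, by simp⟩ : List.IsChain _ (x :: y :: (l₂ ++ [x])))
  have hcyc_pos : 0 < ubWeight k a d (x :: y :: (l₂ ++ [x])) := by
    have hnd' : (y :: (l₂ ++ [x])).Nodup := by
      rw [← List.cons_append, List.nodup_append_comm]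
      exact hcyc
    have := hpc.ubWeight_add_pos hs hxy.1 (isUBWalk_pair hxy.1 hxy.2) (by simp [hxy.1])
      ⟨rfl, by rw [← List.cons_append, List.getLast?_concat], hyx⟩ hnd'
    rwa [← ubWeight_append (by rfl) (by rfl)] at this
  have hsplit : ubWeight k a d (l₁ ++ x :: y :: l₂ ++ x :: l₃) =
      ubWeight k a d (l₁ ++ [x]) + ubWeight k a d (x :: y :: (l₂ ++ [x])) +
        ubWeight k a d (x :: l₃) := by
    rw [ubWeight_append_cons, List.append_assoc, List.cons_append, List.cons_append,
      ubWeight_append_cons l₁ x]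
  refine ⟨l₁ ++ x :: l₃, ⟨by simpa [List.head?_append] using hu, ?_, ?_⟩, by simp; omega, ?_⟩
  · rwa [List.getLast?_append_cons] at hv ⊢
  · have := hc₁.append_overlap hc₃ (List.cons_ne_nil x [])
    simp only [List.append_assoc, List.singleton_append] at this
    exact this
  · rw [hsplit, ubWeight_append_cons]
    linarith

theorem IsUBWalk.exists_nodup_le (hs : ∀ x y, a x y = a y x) (hpc : PathCondition n k a d)
    (hw : IsUBWalk a u v w) :
    ∃ p, IsUBWalk a u v p ∧ p.Nodup ∧ ubWeight k a d p ≤ ubWeight k a d w := by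
  induction hlen : w.length using Nat.strong_induction_on generalizing w with
  | _ N ih =>
    by_cases hnd : w.Nodup
    · exact ⟨w, hw, hnd, le_rfl⟩
    obtain ⟨w', hw', hlt, hle⟩ := hw.exists_shorter hs hpc hnd
    obtain ⟨p, hp, hpn, hle'⟩ := ih _ (hlen ▸ hlt) hw' rfl
    exact ⟨p, hp, hpn, hle'.trans hle⟩

theorem PathCondition.ubWeight_add_pos_of_walks (hs : ∀ x y, a x y = a y x)
    (hpc : PathCondition n k a d) {p q : List (Fin n)} (huv : u ≠ v)
    (hp : IsUBWalk a u v p) (hq : IsUBWalk a v u q) :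
    0 < ubWeight k a d p + ubWeight k a d q := by
  obtain ⟨p', hp', hpn, hle⟩ := hp.exists_nodup_le hs hpc
  obtain ⟨q', hq', hqn, hle'⟩ := hq.exists_nodup_le hs hpc
  have := hpc.ubWeight_add_pos hs huv hp' hpn hq' hqn
  linarith

end PathCondition

section Potential

variable {n k : ℕ} {a : Fin n → Fin n → ℕ} {d : ℕ → ℝ} {f ub lb : Fin n → ℝ} {u v : Fin n}

def ubCandidates (k : ℕ) (a : Fin n → Fin n → ℕ) (d : ℕ → ℝ) (f : Fin n → ℝ) (v : Fin n) :
    Set ℝ :=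
  {x | ∃ i : Fin n, i < v ∧ ∃ w : List (Fin n),
    IsUBWalk a i v w ∧ w.Nodup ∧ x = f i + dotProd k (betaPWalk k a w) d}

def lbCandidates (k : ℕ) (a : Fin n → Fin n → ℕ) (d : ℕ → ℝ) (f : Fin n → ℝ) (v : Fin n) :
    Set ℝ :=
  {x | ∃ i : Fin n, i < v ∧ ∃ w : List (Fin n),
    IsLBWalk a i v w ∧ w.Nodup ∧ x = f i + dotProd k (betaMWalk k a w) d}

def WalkBounded (k : ℕ) (a : Fin n → Fin n → ℕ) (d : ℕ → ℝ) (f : Fin n → ℝ) (x y : Fin n) :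
    Prop :=
  ∀ w, IsUBWalk a x y w → f y - f x < ubWeight k a d w

theorem lb_lt_ub (hs : ∀ x y, a x y = a y x) (hpc : PathCondition n k a d)
    (hbdd : ∀ x y, x < v → y < v → x ≠ y → WalkBounded k a d f x y)
    (hub : IsLeast (ubCandidates k a d f v) (ub v))
    (hlb : IsGreatest (lbCandidates k a d f v) (lb v)) : lb v < ub v := by
  obtain ⟨i₁, hi₁, W₁, hW₁, -, hub_eq⟩ := hub.1
  obtain ⟨i₂, hi₂, W₂, hW₂, -, hlb_eq⟩ := hlb.1
  have hrev : IsUBWalk a v i₂ W₂.reverse := hW₂.reverse hs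
  have hW₂_weight : ubWeight k a d W₂.reverse = -lbWeight k a d W₂ := ubWeight_reverse hs W₂
  rw [hub_eq, hlb_eq, ← ubWeight, ← lbWeight]
  rcases eq_or_ne i₁ i₂ with rfl | hne
  · have := hpc.ubWeight_add_pos_of_walks hs hi₁.ne hW₁ hrev
    linarith
  · have := hbdd i₁ i₂ hi₁ hi₂ hne _ (hW₁.append hrev)
    rw [ubWeight_append hW₁.2.1 hrev.1] at this
    linarith

theorem walkBounded_of_mem_Ioo (hs : ∀ x y, a x y = a y x) (hpc : PathCondition n k a d)
    (huv : u < v) (hub : IsLeast (ubCandidates k a d f v) (ub v))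
    (hlb : IsGreatest (lbCandidates k a d f v) (lb v)) (hf : f v ∈ Set.Ioo (lb v) (ub v)) :
    WalkBounded k a d f u v ∧ WalkBounded k a d f v u := by
  constructor
  · intro w hw
    obtain ⟨p, hp, hpn, hle⟩ := hw.exists_nodup_le hs hpc
    have := hub.2 ⟨u, huv, p, hp, hpn, rfl⟩
    rw [← ubWeight] at this
    linarith [hf.2]
  · intro w hw
    obtain ⟨p, hp, hpn, hle⟩ := hw.exists_nodup_le hs hpc
    have := hlb.2 ⟨u, huv, p.reverse, hp.reverse hs, List.nodup_reverse.2 hpn, rfl⟩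
    rw [← lbWeight, lbWeight_reverse hs] at this
    linarith [hf.1]

theorem walkBounded_of_lt (hs : ∀ x y, a x y = a y x) (hpc : PathCondition n k a d)
    (hub : ∀ v : Fin n, 0 < v.val → IsLeast (ubCandidates k a d f v) (ub v))
    (hlb : ∀ v : Fin n, 0 < v.val → IsGreatest (lbCandidates k a d f v) (lb v))
    (hfv : ∀ v : Fin n, 0 < v.val → f v = (ub v + lb v) / 2) (huv : u < v) :
    WalkBounded k a d f u v ∧ WalkBounded k a d f v u := by
  induction v using WellFoundedLT.induction generalizing u with
  | _ v ih =>
    have hv : 0 < v.val := (Nat.zero_le _).trans_lt huv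
    have hlt : lb v < ub v := lb_lt_ub hs hpc (fun x y hx hy hxy => by
      rcases hxy.lt_or_gt with h | h
      exacts [(ih y hy h).1, (ih x hx h).2]) (hub v hv) (hlb v hv)
    refine walkBounded_of_mem_Ioo hs hpc huv (hub v hv) (hlb v hv) ⟨?_, ?_⟩ <;>
      linarith [hfv v hv]

end Potential

section Bands

variable {k : ℕ} {d : ℕ → ℝ}

theorem IsThreshold.antitoneOn (hd : IsThreshold k d) : AntitoneOn d (Set.Icc 1 k) := by
  rintro i ⟨hi, -⟩ j ⟨-, hj⟩ hij
  induction j, hij using Nat.le_induction with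
  | base => exact le_rfl
  | succ j hij ih => exact (hd.1 j (hi.trans hij) hj).le.trans (ih (by omega))

theorem IsThreshold.pos (hd : IsThreshold k d) {i : ℕ} (hi : 1 ≤ i) (hik : i ≤ k) : 0 < d i :=
  hd.2.trans_le (hd.antitoneOn ⟨hi, hik⟩ ⟨hi.trans hik, le_rfl⟩ hik)

def InStrictBand (k : ℕ) (d : ℕ → ℝ) (t : ℕ) (x : ℝ) : Prop :=
  (if t = k then (0 : ℝ) else d (t + 1)) < x ∧ (t = 0 ∨ x < d t)

def InBand (k : ℕ) (d : ℕ → ℝ) (t : ℕ) (x : ℝ) : Prop :=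
  (t = k ∨ d (t + 1) < x) ∧ (t = 0 ∨ x ≤ d t)

theorem InBand.eq (hd : IsThreshold k d) {s t : ℕ} {x : ℝ} (hs : s ≤ k) (ht : t ≤ k)
    (h₁ : InBand k d s x) (h₂ : InBand k d t x) : s = t := by
  wlog hst : s < t generalizing s t
  · rcases (not_lt.1 hst).lt_or_eq with h | h
    exacts [(this ht hs h₂ h₁ h).symm, h.symm]
  have hlow : d (s + 1) < x := h₁.1.resolve_left (by omega)
  have hup : x ≤ d t := h₂.2.resolve_left (by omega)
  linarith [hd.antitoneOn ⟨Nat.le_add_left 1 s, by omega⟩ ⟨by omega, ht⟩ hst]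

theorem InStrictBand.inBand {t : ℕ} {x : ℝ} (h : InStrictBand k d t x) : InBand k d t x := by
  refine ⟨?_, h.2.imp_right le_of_lt⟩
  by_cases ht : t = k
  · exact Or.inl ht
  · exact Or.inr (by simpa [ht] using h.1)

theorem InStrictBand.pos (hd : IsThreshold k d) {t : ℕ} {x : ℝ} (ht : t ≤ k)
    (h : InStrictBand k d t x) : 0 < x := by
  have := h.1
  split_ifs at this with htk
  · exact this
  · linarith [hd.pos (Nat.le_add_left 1 t) (by omega : t + 1 ≤ k)]

theorem inStrictBand_of_walkBounded {n : ℕ} {a : Fin n → Fin n → ℕ} {f : Fin n → ℝ}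
    {u v : Fin n} (hs : ∀ x y, a x y = a y x) (hle : ∀ x y, a x y ≤ k) (huv : u < v)
    (h₁ : WalkBounded k a d f u v) (h₂ : WalkBounded k a d f v u) :
    InStrictBand k d (a u v) (f v - f u) := by
  constructor
  · have := h₂ [v, u] (isUBWalk_pair huv.ne' fun h => absurd h huv.not_gt)
    rw [show [v, u] = [u, v].reverse from rfl, ubWeight_reverse hs, lbWeight_pair hle huv] at this
    linarith
  · refine (Nat.eq_zero_or_pos (a u v)).imp_right fun h => ?_
    have := h₁ [u, v] (isUBWalk_pair huv.ne fun _ => h)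
    rwa [ubWeight_pair hle huv h] at this

theorem IsUnifEmb.of_satisfiesStrict {n : ℕ} {a : Fin n → Fin n → ℕ} {f : Fin n → ℝ}
    (hd : IsThreshold k d) (hs : ∀ x y, a x y = a y x) (hdiag : ∀ x, a x x = k)
    (hle : ∀ x y, a x y ≤ k) (h : SatisfiesStrict n k a d f) : IsUnifEmb n k a d f := by
  have hband : ∀ u v, InBand k d (a u v) |f v - f u| := by
    intro u v
    rcases lt_trichotomy u v with huv | rfl | hvu
    · have hst : InStrictBand k d (a u v) (f v - f u) := (h u v huv _ (hle u v)).1 rfl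
      rw [abs_of_pos (hst.pos hd (hle u v))]
      exact hst.inBand
    · rw [hdiag, sub_self, abs_zero]
      exact ⟨Or.inl rfl, Or.inr hd.2.le⟩
    · have hst : InStrictBand k d (a v u) (f u - f v) := (h v u hvu _ (hle v u)).1 rfl
      rw [hs, abs_sub_comm, abs_of_pos (hst.pos hd (hle v u))]
      exact hst.inBand
  exact fun u v t ht => ⟨fun h => h ▸ hband u v, (hband u v).eq hd (hle u v) ht⟩

end Bands

theorem statement9_general (n k : ℕ) (a : Fin n → Fin n → ℕ)
    (hA : IsRobinson n k a) (d : ℕ → ℝ) (hd : IsThreshold k d)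
    (hpc : PathCondition n k a d) (f ub lb : Fin n → ℝ)
    (hub : ∀ v : Fin n, 0 < v.val → IsLeast
      {x : ℝ | ∃ i : Fin n, i < v ∧ ∃ w : List (Fin n),
        IsUBWalk a i v w ∧ w.Nodup ∧ x = f i + dotProd k (betaPWalk k a w) d} (ub v))
    (hlb : ∀ v : Fin n, 0 < v.val → IsGreatest
      {x : ℝ | ∃ i : Fin n, i < v ∧ ∃ w : List (Fin n),
        IsLBWalk a i v w ∧ w.Nodup ∧ x = f i + dotProd k (betaMWalk k a w) d} (lb v))
    (hfv : ∀ v : Fin n, 0 < v.val → f v = (ub v + lb v) / 2) :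
    SatisfiesStrict n k a d f ∧ IsUnifEmb n k a d f := by
  obtain ⟨hs, hdiag, hle, -⟩ := hA
  have hstrict : SatisfiesStrict n k a d f := by
    intro u v huv t ht
    obtain ⟨h₁, h₂⟩ := walkBounded_of_lt hs hpc hub hlb hfv huv
    have hband := inStrictBand_of_walkBounded hs hle huv h₁ h₂
    exact ⟨fun h => h ▸ hband,
      fun h => hband.inBand.eq hd (hle u v) ht (InStrictBand.inBand h)⟩
  exact ⟨hstrict, .of_satisfiesStrict hd hs hdiag hle hstrict⟩

/-- Lemma 5: given `d ∈ 𝔻ᵏ` satisfying the path condition for `A`, the map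
`Π` defined recursively by `Π(1) = 0` and `Π(v) = (ub_v + lb_v)/2` satisfies the strict
inequality system for `A` with respect to `d`; in particular it is a uniform embedding of
`A` with respect to `d`. -/
theorem statement9 (n k : ℕ) (hn : 1 ≤ n) (hk : 1 ≤ k) (a : Fin n → Fin n → ℕ)
    (hA : IsRobinson n k a) (d : ℕ → ℝ) (hd : IsThreshold k d)
    (hpc : PathCondition n k a d) (f ub lb : Fin n → ℝ)
    (hub : ∀ v : Fin n, 0 < v.val → IsLeast
      {x : ℝ | ∃ i : Fin n, i < v ∧ ∃ w : List (Fin n),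
        IsUBWalk a i v w ∧ w.Nodup ∧ x = f i + dotProd k (betaPWalk k a w) d} (ub v))
    (hlb : ∀ v : Fin n, 0 < v.val → IsGreatest
      {x : ℝ | ∃ i : Fin n, i < v ∧ ∃ w : List (Fin n),
        IsLBWalk a i v w ∧ w.Nodup ∧ x = f i + dotProd k (betaMWalk k a w) d} (lb v))
    (hf0 : f ⟨0, hn⟩ = 0)
    (hfv : ∀ v : Fin n, 0 < v.val → f v = (ub v + lb v) / 2) :
    SatisfiesStrict n k a d f ∧ IsUnifEmb n k a d f :=
  statement9_general n k a hA d hd hpc f ub lb hub hlb hfv
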